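/- arXiv:2312.17556 — 2 statements merged into one kernel-verified Lean document; each statement's English description precedes it below -/
import Mathlib

section
/- There is at most one tuple of nonnegative integers (n_0, n_1, n_2, r_0, r_1, r_2) satisfying the rooted arc constraint and w_i = r_i + n_{i+1} + n_{i-1} (indices mod 3) for given nonnegative integers w_0, w_1, w_2. -/
/-- Edge weights determine rooted normal arc coordinates: there
is at most one tuple `(n, r)` of nonnegative arc coordinates satisfying the
rooted arc constraint and `w i = r i + n (i+1) + n (i-1)` for all `i`. -/
theorem arc_coords_unique (w n r n' r' : ZMod 3 → ℕ)
    (hw : ∀ i, w i = r i + n (i + 1) + n (i - 1))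
    (hroot : ∀ i, 0 < r i → n i = 0 ∧ r (i + 1) = 0 ∧ r (i - 1) = 0)
    (hw' : ∀ i, w i = r' i + n' (i + 1) + n' (i - 1))
    (hroot' : ∀ i, 0 < r' i → n' i = 0 ∧ r' (i + 1) = 0 ∧ r' (i - 1) = 0) :
    n = n' ∧ r = r' := by
  have s01 : (0 : ZMod 3) + 1 = 1 := rfl
  have s0m : (0 : ZMod 3) - 1 = 2 := rfl
  have s11 : (1 : ZMod 3) + 1 = 2 := rfl
  have s1m : (1 : ZMod 3) - 1 = 0 := rfl
  have s21 : (2 : ZMod 3) + 1 = 0 := rfl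
  have s2m : (2 : ZMod 3) - 1 = 1 := rfl
  have e0 := hw 0; have e1 := hw 1; have e2 := hw 2
  have f0 := hw' 0; have f1 := hw' 1; have f2 := hw' 2
  rw [s01, s0m] at e0 f0; rw [s11, s1m] at e1 f1; rw [s21, s2m] at e2 f2
  have d0 : r 0 = 0 ∨ (n 0 = 0 ∧ r 1 = 0 ∧ r 2 = 0) := by
    rcases Nat.eq_zero_or_pos (r 0) with h | h
    · exact Or.inl h
    · have := hroot 0 h; rw [s01, s0m] at this; exact Or.inr this
  have d1 : r 1 = 0 ∨ (n 1 = 0 ∧ r 2 = 0 ∧ r 0 = 0) := by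
    rcases Nat.eq_zero_or_pos (r 1) with h | h
    · exact Or.inl h
    · have := hroot 1 h; rw [s11, s1m] at this; exact Or.inr this
  have d2 : r 2 = 0 ∨ (n 2 = 0 ∧ r 0 = 0 ∧ r 1 = 0) := by
    rcases Nat.eq_zero_or_pos (r 2) with h | h
    · exact Or.inl h
    · have := hroot 2 h; rw [s21, s2m] at this; exact Or.inr this
  have d0' : r' 0 = 0 ∨ (n' 0 = 0 ∧ r' 1 = 0 ∧ r' 2 = 0) := by
    rcases Nat.eq_zero_or_pos (r' 0) with h | h
    · exact Or.inl h
    · have := hroot' 0 h; rw [s01, s0m] at this; exact Or.inr this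
  have d1' : r' 1 = 0 ∨ (n' 1 = 0 ∧ r' 2 = 0 ∧ r' 0 = 0) := by
    rcases Nat.eq_zero_or_pos (r' 1) with h | h
    · exact Or.inl h
    · have := hroot' 1 h; rw [s11, s1m] at this; exact Or.inr this
  have d2' : r' 2 = 0 ∨ (n' 2 = 0 ∧ r' 0 = 0 ∧ r' 1 = 0) := by
    rcases Nat.eq_zero_or_pos (r' 2) with h | h
    · exact Or.inl h
    · have := hroot' 2 h; rw [s21, s2m] at this; exact Or.inr this
  have cases3 : ∀ i : ZMod 3, i = 0 ∨ i = 1 ∨ i = 2 := by decide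
  constructor <;> (funext i; rcases cases3 i with h | h | h <;> subst h) <;> omega
end

section
/- Let G = (V, E) be a finite multigraph and fix an ordering of V. If every cutset C_ℓ of this ordering has size at most k, then the treewidth of G is at most k (cutwidth bounds treewidth). -/
/-!
Order the bags along a path: the bag at position `ℓ` holds `ℓ` together with the right endpoint
of every edge of the cutset `C_ℓ`, so it has at most `|C_ℓ| + 1` vertices. An edge lies in the bag
at its left endpoint, and a vertex `v` lies exactly in the bags at positions running from the
leftmost left endpoint of an edge ending at `v` up to `v` itself, an interval of the path.
-/

/-- The cutset at position `ℓ` of the ordering `(0, 1, ..., n-1)` of the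
vertices `Fin n` of a multigraph whose edges are indexed by `ι` with
endpoints `ends e`. -/
def cutset (n : ℕ) {ι : Type} [Fintype ι] [DecidableEq ι]
    (ends : ι → Fin n × Fin n) (ℓ : Fin n) : Finset ι :=
  Finset.univ.filter fun e =>
    ((ends e).1 ≤ ℓ ∧ ℓ < (ends e).2) ∨ ((ends e).2 ≤ ℓ ∧ ℓ < (ends e).1)

/-- A tree decomposition of a multigraph with vertex set `V` and edges
indexed by `ι` with endpoints `ends`: a tree with bags covering every vertex,
containing both endpoints of every edge in some bag, and such that for each
vertex the bags containing it span a connected subtree. -/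
structure TreeDecomp (V : Type) [DecidableEq V] (ι : Type)
    (ends : ι → V × V) where
  I : Type
  G : SimpleGraph I
  isTree : G.IsTree
  bag : I → Finset V
  covers : ∀ v : V, ∃ i : I, v ∈ bag i
  coversEdge : ∀ e : ι, ∃ i : I, (ends e).1 ∈ bag i ∧ (ends e).2 ∈ bag i
  subtree : ∀ v : V, (G.induce {i : I | v ∈ bag i}).Connected

open SimpleGraph Finset

namespace SimpleGraph

lemma pathGraph_mem_edges_of_walk {n : ℕ} {u w i j : Fin n} (p : (pathGraph n).Walk u w)
    (hij : i.val + 1 = j.val) (hu : u ≤ i) (hw : j ≤ w) : s(i, j) ∈ p.edges := by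
  induction p with
  | nil => exact absurd (hu.trans_lt (Fin.lt_def.mpr (by omega))) (not_lt.mpr hw)
  | @cons u c w hadj q ih =>
    by_cases hc : c ≤ i
    · exact List.mem_cons_of_mem _ (ih hc hw)
    · have hui : u = i ∧ c = j := by
        rw [pathGraph_adj] at hadj
        rw [Fin.le_def] at hu hc
        exact ⟨Fin.ext (by omega), Fin.ext (by omega)⟩
      simp [hui]

lemma pathGraph_isAcyclic (n : ℕ) : (pathGraph n).IsAcyclic := by
  rw [isAcyclic_iff_forall_adj_isBridge]
  intro v w hadj
  rw [isBridge_iff_forall_walk_mem_edges]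
  intro p
  rcases pathGraph_adj.mp hadj with h | h
  · exact pathGraph_mem_edges_of_walk p h le_rfl le_rfl
  · simpa [Sym2.eq_swap] using pathGraph_mem_edges_of_walk p.reverse h le_rfl le_rfl

lemma pathGraph_isTree (n : ℕ) [NeZero n] : (pathGraph n).IsTree :=
  ⟨⟨pathGraph_preconnected n⟩, pathGraph_isAcyclic n⟩

lemma pathGraph_induce_preconnected {n : ℕ} {s : Set (Fin n)} (hs : s.OrdConnected) :
    ((pathGraph n).induce s).Preconnected := by
  have reach : ∀ d : ℕ, ∀ a b : s, (b : Fin n).val = (a : Fin n).val + d →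
      ((pathGraph n).induce s).Reachable a b := by
    intro d
    induction d with
    | zero => intro a b h; rw [Subtype.ext (Fin.ext h)]
    | succ d ih =>
      intro a b h
      let c : Fin n := ⟨(a : Fin n).val + d, by omega⟩
      have hc : c ∈ s :=
        hs.out a.2 b.2 ⟨Fin.le_def.mpr (by simp [c]), Fin.le_def.mpr (by simp [c]; omega)⟩
      refine (ih a ⟨c, hc⟩ rfl).trans (Adj.reachable ?_)
      exact pathGraph_adj.mpr (Or.inl (by simp [c, h]; omega))
  intro a b
  rcases le_total (a : Fin n) b with h | h
  · exact reach _ a b (Nat.add_sub_of_le h).symm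
  · exact (reach _ b a (Nat.add_sub_of_le h).symm).symm

end SimpleGraph

namespace TreeDecomp

variable {V ι : Type} [DecidableEq V] {ends : ι → V × V}

def ofIsEmpty [IsEmpty V] : TreeDecomp V ι ends where
  I := PUnit
  G := ⊥
  isTree := .of_subsingleton
  bag _ := ∅
  covers v := isEmptyElim v
  coversEdge e := isEmptyElim (ends e).1
  subtree v := isEmptyElim v

def ofPath {m : ℕ} [NeZero m] (bag : Fin m → Finset V) (covers : ∀ v, ∃ i, v ∈ bag i)
    (coversEdge : ∀ e, ∃ i, (ends e).1 ∈ bag i ∧ (ends e).2 ∈ bag i)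
    (ordConnected : ∀ v, {i | v ∈ bag i}.OrdConnected) : TreeDecomp V ι ends where
  I := Fin m
  G := pathGraph m
  isTree := pathGraph_isTree m
  bag := bag
  covers := covers
  coversEdge := coversEdge
  subtree v :=
    have : Nonempty {i | v ∈ bag i} := (covers v).elim fun i hi => ⟨⟨i, hi⟩⟩
    ⟨pathGraph_induce_preconnected (ordConnected v)⟩

end TreeDecomp

section CutBag

variable {n : ℕ} {ι : Type} [Fintype ι] [DecidableEq ι] (ends : ι → Fin n × Fin n)

lemma mem_cutset_iff {ℓ : Fin n} {e : ι} :
    e ∈ cutset n ends ℓ ↔ min (ends e).1 (ends e).2 ≤ ℓ ∧ ℓ < max (ends e).1 (ends e).2 := by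
  simp only [cutset, mem_filter, mem_univ, true_and, min_le_iff, lt_max_iff]
  grind

def cutBag (ℓ : Fin n) : Finset (Fin n) :=
  insert ℓ ((cutset n ends ℓ).image fun e => max (ends e).1 (ends e).2)

lemma card_cutBag_le (ℓ : Fin n) : (cutBag ends ℓ).card ≤ (cutset n ends ℓ).card + 1 :=
  (card_insert_le _ _).trans (Nat.add_le_add_right card_image_le 1)

lemma mem_cutBag_iff {v ℓ : Fin n} :
    v ∈ cutBag ends ℓ ↔ v = ℓ ∨ ∃ e, min (ends e).1 (ends e).2 ≤ ℓ ∧ ℓ < v ∧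
      max (ends e).1 (ends e).2 = v := by
  simp only [cutBag, mem_insert, mem_image, mem_cutset_iff]
  grind

lemma self_mem_cutBag (ℓ : Fin n) : ℓ ∈ cutBag ends ℓ :=
  mem_insert_self _ _

lemma exists_cutBag_ends (e : ι) :
    ∃ ℓ, (ends e).1 ∈ cutBag ends ℓ ∧ (ends e).2 ∈ cutBag ends ℓ := by
  refine ⟨min (ends e).1 (ends e).2, ?_, ?_⟩ <;> rw [mem_cutBag_iff] <;> grind

lemma ordConnected_cutBag (v : Fin n) : {ℓ | v ∈ cutBag ends ℓ}.OrdConnected := by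
  refine ⟨fun i hi l hl j hj => ?_⟩
  simp only [Set.mem_ofPred_eq, mem_cutBag_iff] at hi hl ⊢
  grind

def cutDecomp [NeZero n] : TreeDecomp (Fin n) ι ends :=
  .ofPath (cutBag ends) (fun v => ⟨v, self_mem_cutBag ends v⟩) (exists_cutBag_ends ends)
    (ordConnected_cutBag ends)

end CutBag

/-- Cutwidth bounds treewidth: if, for a fixed ordering of the
vertices of a finite multigraph, every cutset has size at most `k`, then the
graph admits a tree decomposition of width at most `k` (all bags of size at
most `k + 1`), i.e. its treewidth is at most `k`. -/
theorem treewidth_le_cutwidth (n k : ℕ) (ι : Type) [Fintype ι]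
    [DecidableEq ι] (ends : ι → Fin n × Fin n)
    (hcut : ∀ ℓ : Fin n, (cutset n ends ℓ).card ≤ k) :
    ∃ td : TreeDecomp (Fin n) ι ends, ∀ i : td.I, (td.bag i).card ≤ k + 1 := by
  obtain rfl | hn := Nat.eq_zero_or_pos n
  · exact ⟨.ofIsEmpty, fun _ => by simp [TreeDecomp.ofIsEmpty]⟩
  · have : NeZero n := ⟨hn.ne'⟩
    exact ⟨cutDecomp ends, fun ℓ => (card_cutBag_le ends ℓ).trans (Nat.add_le_add_right (hcut ℓ) 1)⟩
end
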